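/- arXiv:2403.19169 — 3 statements merged into one kernel-verified Lean document; each statement's English description precedes it below -/
import Mathlib

section
/- Let n ≥ 2, let r > 0, and let u be a C² function defined on an open neighborhood of the closed ball B̄_r(0) ⊆ ℝⁿ. Then u satisfies the static equation D²u(x)(v, w) = Δu(x)·⟨v, w⟩ on the open ball B_r(0) together with the boundary condition ⟨∇u(x), x⟩ = u(x) for all x with |x| = r (which is the non-generic boundary condition u_ν = (H/(n−1))·u for the outward unit normal ν = x/r of the ball, whose sphere has H/(n−1) = 1/r), if and only if there exists b ∈ ℝⁿ such that u(x) = ⟨b, x⟩ for all x ∈ B̄_r(0). Hence the interior of the Euclidean sphere S_r is a non-generic domain with ker Φ* = span{x₁, …, xₙ}. -/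
open scoped RealInnerProductSpace

/-- For `n ≥ 2` and `r > 0`, a `C²` function on an open neighborhood of the closed ball
`B̄_r(0) ⊆ ℝⁿ` satisfies the static equation on `B_r(0)` together with the boundary condition
`⟨∇u(x), x⟩ = u(x)` on `|x| = r` if and only if `u(x) = ⟨b, x⟩` on `B̄_r(0)` for some `b ∈ ℝⁿ`.
Hence the ball is a non-generic domain with `ker Φ* = span{x₁, …, xₙ}`. -/
theorem ball_nongeneric (n : ℕ) (hn : 2 ≤ n) (r : ℝ) (hr : 0 < r)
    (U : Set (EuclideanSpace ℝ (Fin n))) (hUopen : IsOpen U)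
    (hU : Metric.closedBall (0 : EuclideanSpace ℝ (Fin n)) r ⊆ U)
    (u : EuclideanSpace ℝ (Fin n) → ℝ) (hu : ContDiffOn ℝ 2 u U) :
    ((∀ x ∈ Metric.ball (0 : EuclideanSpace ℝ (Fin n)) r,
        ∀ v w : EuclideanSpace ℝ (Fin n),
          fderiv ℝ (fderiv ℝ u) x v w =
            (∑ i : Fin n, fderiv ℝ (fderiv ℝ u) x (EuclideanSpace.single i 1)
              (EuclideanSpace.single i 1)) * ⟪v, w⟫) ∧
      (∀ x : EuclideanSpace ℝ (Fin n), ‖x‖ = r → fderiv ℝ u x x = u x)) ↔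
      ∃ b : EuclideanSpace ℝ (Fin n),
        ∀ x ∈ Metric.closedBall (0 : EuclideanSpace ℝ (Fin n)) r, u x = ⟪b, x⟫ := by
  have _E : True := trivial
  have hball : Metric.ball (0 : EuclideanSpace ℝ (Fin n)) r ⊆ Metric.closedBall 0 r := Metric.ball_subset_closedBall
  have hballU : Metric.ball (0 : EuclideanSpace ℝ (Fin n)) r ⊆ U := hball.trans hU
  have hclos : closure (Metric.ball (0 : EuclideanSpace ℝ (Fin n)) r) = Metric.closedBall 0 r :=
    closure_ball (0 : EuclideanSpace ℝ (Fin n)) hr.ne'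
  -- fderiv u is C¹ and continuous on U
  have hfd : ContDiffOn ℝ 1 (fderiv ℝ u) U := hu.fderiv_of_isOpen (m := 1) hUopen (by norm_num)
  have hfdDiff : DifferentiableOn ℝ (fderiv ℝ u) U := hfd.differentiableOn (by norm_num)
  have hfdCont : ContinuousOn (fderiv ℝ u) U := hfd.continuousOn
  have huDiff : DifferentiableOn ℝ u U := hu.differentiableOn (by norm_num)
  constructor
  · rintro ⟨h1, h2⟩
    -- step 1: Laplacian vanishes, hence Hessian vanishes on the ball
    have hhess : ∀ x ∈ Metric.ball (0 : EuclideanSpace ℝ (Fin n)) r, fderiv ℝ (fderiv ℝ u) x = 0 := by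
      intro x hx
      set Δ := ∑ i : Fin n, fderiv ℝ (fderiv ℝ u) x (EuclideanSpace.single i 1)
              (EuclideanSpace.single i 1) with hΔ
      have hsum : Δ = Δ * n := by
        calc Δ = ∑ i : Fin n, fderiv ℝ (fderiv ℝ u) x (EuclideanSpace.single i 1)
              (EuclideanSpace.single i 1) := hΔ
          _ = ∑ i : Fin n, Δ * ⟪(EuclideanSpace.single i (1:ℝ)), EuclideanSpace.single i 1⟫ := by
              refine Finset.sum_congr rfl fun i _ => ?_
              exact h1 x hx _ _
          _ = Δ * n := by simp [Finset.sum_const, mul_comm]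
      have hΔ0 : Δ = 0 := by
        have : Δ * (1 - (n : ℝ)) = 0 := by ring_nf; linarith [hsum]
        rcases mul_eq_zero.1 this with h | h
        · exact h
        · exfalso
          have : (2 : ℝ) ≤ n := by exact_mod_cast hn
          linarith
      ext v w
      simp [h1 x hx v w, ← hΔ, hΔ0]
    -- step 2: fderiv u is constant (= L) on the ball
    set L := fderiv ℝ u (0 : EuclideanSpace ℝ (Fin n)) with hL
    have h0mem : (0 : EuclideanSpace ℝ (Fin n)) ∈ Metric.ball (0 : EuclideanSpace ℝ (Fin n)) r := by simp [hr]
    have hconst : ∀ x ∈ Metric.ball (0 : EuclideanSpace ℝ (Fin n)) r, fderiv ℝ u x = L := by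
      intro x hx
      exact (convex_ball (0:EuclideanSpace ℝ (Fin n)) r).is_const_of_fderivWithin_eq_zero
        (hfdDiff.mono hballU)
        (fun z hz => by
          rw [fderivWithin_of_isOpen Metric.isOpen_ball hz]
          exact hhess z hz) hx h0mem
    -- extend to the closed ball by continuity
    have hconst' : ∀ x ∈ Metric.closedBall (0 : EuclideanSpace ℝ (Fin n)) r, fderiv ℝ u x = L := by
      have := Set.EqOn.of_subset_closure (f := fderiv ℝ u) (g := fun _ => L)
        (s := Metric.ball (0:EuclideanSpace ℝ (Fin n)) r) (t := Metric.closedBall (0:EuclideanSpace ℝ (Fin n)) r)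
        (fun x hx => hconst x hx) (hfdCont.mono hU) continuousOn_const hball (hclos ▸ le_rfl)
      exact fun x hx => this hx
    -- step 3: u x = u 0 + L x on the ball
    have haff : ∀ x ∈ Metric.ball (0 : EuclideanSpace ℝ (Fin n)) r, u x = u 0 + L x := by
      intro x hx
      have hdiff : DifferentiableOn ℝ (fun y => u y - L y) (Metric.ball (0:EuclideanSpace ℝ (Fin n)) r) :=
        (huDiff.mono hballU).sub (L.differentiable.differentiableOn)
      have := (convex_ball (0:EuclideanSpace ℝ (Fin n)) r).is_const_of_fderivWithin_eq_zero hdiff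
        (fun z hz => by
          rw [fderivWithin_of_isOpen Metric.isOpen_ball hz]
          have hdu : DifferentiableAt ℝ u z :=
            (huDiff z (hballU hz)).differentiableAt (hUopen.mem_nhds (hballU hz))
          rw [fderiv_fun_sub hdu L.differentiableAt, L.fderiv, hconst z hz, sub_self]) hx h0mem
      simp only [map_zero, sub_zero] at this
      linarith [this]
    have haff' : ∀ x ∈ Metric.closedBall (0 : EuclideanSpace ℝ (Fin n)) r, u x = u 0 + L x := by
      have := Set.EqOn.of_subset_closure (f := u) (g := fun x => u 0 + L x)
        (s := Metric.ball (0:EuclideanSpace ℝ (Fin n)) r) (t := Metric.closedBall (0:EuclideanSpace ℝ (Fin n)) r)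
        (fun x hx => haff x hx) ((hu.continuousOn).mono hU)
        (continuousOn_const.add L.continuous.continuousOn) hball (hclos ▸ le_rfl)
      exact fun x hx => this hx
    -- step 4: boundary condition forces u 0 = 0
    have hnpos : 0 < n := lt_of_lt_of_le (by norm_num) hn
    set x₀ : EuclideanSpace ℝ (Fin n) := EuclideanSpace.single (⟨0, hnpos⟩ : Fin n) r with hx₀
    have hx₀norm : ‖x₀‖ = r := by simp [hx₀, abs_of_pos hr]
    have hx₀mem : x₀ ∈ Metric.closedBall (0 : EuclideanSpace ℝ (Fin n)) r := by
      simp [Metric.mem_closedBall, dist_eq_norm, hx₀norm]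
    have hb := h2 x₀ hx₀norm
    rw [hconst' x₀ hx₀mem, haff' x₀ hx₀mem] at hb
    have hu0 : u 0 = 0 := by linarith
    -- conclude
    refine ⟨(InnerProductSpace.toDual ℝ (EuclideanSpace ℝ (Fin n))).symm L, fun x hx => ?_⟩
    rw [haff' x hx, hu0, InnerProductSpace.toDual_symm_apply]
    ring
  · rintro ⟨b, hb⟩
    have hLfd : ∀ x ∈ Metric.ball (0 : EuclideanSpace ℝ (Fin n)) r, fderiv ℝ u x = innerSL ℝ b := by
      intro x hx
      have hev : u =ᶠ[nhds x] fun y => (innerSL ℝ b) y := by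
        filter_upwards [Metric.isOpen_ball.mem_nhds hx] with y hy
        exact hb y (hball hy)
      rw [hev.fderiv_eq, (innerSL ℝ b).fderiv]
    constructor
    · intro x hx v w
      have hev : fderiv ℝ u =ᶠ[nhds x] fun _ => innerSL ℝ b := by
        filter_upwards [Metric.isOpen_ball.mem_nhds hx] with y hy
        exact hLfd y hy
      have h0 : fderiv ℝ (fderiv ℝ u) x = 0 := by
        rw [hev.fderiv_eq, fderiv_fun_const]
        rfl
      simp [h0]
    · intro x hxnorm
      have hxcb : x ∈ Metric.closedBall (0 : EuclideanSpace ℝ (Fin n)) r := by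
        simp [Metric.mem_closedBall, dist_eq_norm, hxnorm]
      have heq := Set.EqOn.of_subset_closure (f := fderiv ℝ u) (g := fun _ => innerSL ℝ b)
        (s := Metric.ball (0:EuclideanSpace ℝ (Fin n)) r) (t := Metric.closedBall (0:EuclideanSpace ℝ (Fin n)) r)
        (fun y hy => hLfd y hy) (hfdCont.mono hU) continuousOn_const hball (hclos ▸ le_rfl)
      rw [heq hxcb, hb x hxcb]
      rfl
end

section
/- Let n ≥ 2, let r > 0, and let u be a C² function defined on an open neighborhood of the closed exterior region {x ∈ ℝⁿ : |x| ≥ r}. Then u satisfies the static equation D²u(x)(v, w) = Δu(x)·⟨v, w⟩ on {|x| > r} together with the boundary condition ⟨∇u(x), x⟩ = u(x) for all |x| = r (which is the non-generic boundary condition u_ν = (H/(n−1))·u for the exterior region, whose outward unit normal is ν = −x/r and whose sphere has H/(n−1) = −1/r), if and only if there exists b ∈ ℝⁿ such that u(x) = ⟨b, x⟩ for all |x| ≥ r. Hence the exterior of the Euclidean sphere S_r is a non-generic domain with ker Φ* = span{x₁, …, xₙ}. -/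
open scoped RealInnerProductSpace

open Metric Set

/-- If a function has zero Fréchet derivative on an open preconnected set, it is constant there. -/
lemma const_of_fderiv_zero_on {E F : Type*} [NormedAddCommGroup E] [NormedSpace ℝ E]
    [NormedAddCommGroup F] [NormedSpace ℝ F] {f : E → F} {s : Set E}
    (hs : IsOpen s) (hsc : IsPreconnected s)
    (hd : ∀ x ∈ s, DifferentiableAt ℝ f x) (hz : ∀ x ∈ s, fderiv ℝ f x = 0)
    {x y : E} (hx : x ∈ s) (hy : y ∈ s) : f x = f y := by
  haveI := Subtype.preconnectedSpace hsc
  have hlc : IsLocallyConstant (fun p : s => f p) := by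
    rw [IsLocallyConstant.iff_exists_open]
    rintro ⟨a, ha⟩
    obtain ⟨ε, hε, hball⟩ := Metric.isOpen_iff.1 hs a ha
    refine ⟨Subtype.val ⁻¹' Metric.ball a ε,
      Metric.isOpen_ball.preimage continuous_subtype_val, by simpa using hε, ?_⟩
    rintro ⟨z, hzs⟩ hmem
    exact (convex_ball a ε).is_const_of_fderivWithin_eq_zero
      (fun w hw => (hd w (hball hw)).differentiableWithinAt)
      (fun w hw => by rw [fderivWithin_of_isOpen Metric.isOpen_ball hw]; exact hz w (hball hw))
      (by simpa using hmem) (Metric.mem_ball_self hε)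
  exact hlc.apply_eq_of_preconnectedSpace ⟨x, hx⟩ ⟨y, hy⟩

/-- The exterior of a ball in dimension `≥ 2` is preconnected. -/
lemma isPreconnected_exterior (n : ℕ) (hn : 2 ≤ n) (r : ℝ) (hr : 0 < r) :
    IsPreconnected {x : EuclideanSpace ℝ (Fin n) | r < ‖x‖} := by
  have hrank : 1 < Module.rank ℝ (EuclideanSpace ℝ (Fin n)) := by
    rw [← Module.finrank_eq_rank]
    exact_mod_cast lt_of_lt_of_le one_lt_two (by simpa using hn)
  have hsph := (isConnected_sphere hrank (0 : EuclideanSpace ℝ (Fin n)) zero_le_one).isPreconnected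
  have hprod : IsPreconnected ((Metric.sphere (0 : EuclideanSpace ℝ (Fin n)) 1) ×ˢ Set.Ioi r) :=
    hsph.prod isPreconnected_Ioi
  have himg : IsPreconnected ((fun p : EuclideanSpace ℝ (Fin n) × ℝ => p.2 • p.1) ''
      ((Metric.sphere (0 : EuclideanSpace ℝ (Fin n)) 1) ×ˢ Set.Ioi r)) :=
    hprod.image _ (Continuous.continuousOn (by fun_prop))
  convert himg using 1
  ext x
  simp only [Set.mem_setOf_eq, Set.mem_image, Set.mem_prod, Metric.mem_sphere,
    dist_zero_right, Set.mem_Ioi, Prod.exists]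
  constructor
  · intro hx
    have hx0 : ‖x‖ ≠ 0 := ne_of_gt (hr.trans hx)
    exact ⟨‖x‖⁻¹ • x, ‖x‖, ⟨by simp [norm_smul, abs_of_nonneg, inv_mul_cancel₀ hx0], hx⟩,
      by rw [smul_smul, mul_inv_cancel₀ hx0, one_smul]⟩
  · rintro ⟨y, t, ⟨hy, ht⟩, rfl⟩
    have ht0 : 0 < t := hr.trans ht
    rw [norm_smul, hy, mul_one, Real.norm_eq_abs, abs_of_pos ht0]
    exact ht

/-- A continuous-at-`x` function equal to a constant on the open exterior equals it on `‖x‖ = r`. -/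
lemma boundary_limit {E : Type*} [NormedAddCommGroup E] [NormedSpace ℝ E]
    {α : Type*} [TopologicalSpace α] [T2Space α] {f : E → α} {r : ℝ} (hr : 0 < r)
    {x : E} (hx : ‖x‖ = r) (hf : ContinuousAt f x) {c : α}
    (hc : ∀ y : E, r < ‖y‖ → f y = c) : f x = c := by
  have hseq : Filter.Tendsto (fun k : ℕ => (1 + ((k : ℝ) + 1)⁻¹) • x) Filter.atTop (nhds x) := by
    have h1 : Filter.Tendsto (fun k : ℕ => (1 + ((k : ℝ) + 1)⁻¹)) Filter.atTop (nhds 1) := by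
      have := (tendsto_one_div_add_atTop_nhds_zero_nat :
        Filter.Tendsto (fun n : ℕ => 1 / ((n : ℝ) + 1)) Filter.atTop (nhds 0))
      simpa [one_div] using tendsto_const_nhds.add this
    simpa using h1.smul_const x
  have heq : ∀ k : ℕ, f ((1 + ((k : ℝ) + 1)⁻¹) • x) = c := by
    intro k
    apply hc
    have hpos : (0 : ℝ) < ((k : ℝ) + 1)⁻¹ := by positivity
    rw [norm_smul, Real.norm_eq_abs, abs_of_pos (by linarith), hx]
    nlinarith
  have := (hf.tendsto).comp hseq
  simp only [Function.comp_def, heq] at this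
  exact tendsto_nhds_unique (l := (Filter.atTop : Filter ℕ)) this tendsto_const_nhds


/-- For `n ≥ 2` and `r > 0`, a `C²` function on an open neighborhood of the closed exterior
region `{|x| ≥ r} ⊆ ℝⁿ` satisfies the static equation on `{|x| > r}` together with the boundary
condition `⟨∇u(x), x⟩ = u(x)` on `|x| = r` if and only if `u(x) = ⟨b, x⟩` on `{|x| ≥ r}` for
some `b ∈ ℝⁿ`. Hence the exterior of the sphere `S_r` is a non-generic domain with
`ker Φ* = span{x₁, …, xₙ}`. -/
theorem exterior_nongeneric (n : ℕ) (hn : 2 ≤ n) (r : ℝ) (hr : 0 < r)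
    (U : Set (EuclideanSpace ℝ (Fin n))) (hUopen : IsOpen U)
    (hU : {x : EuclideanSpace ℝ (Fin n) | r ≤ ‖x‖} ⊆ U)
    (u : EuclideanSpace ℝ (Fin n) → ℝ) (hu : ContDiffOn ℝ 2 u U) :
    ((∀ x : EuclideanSpace ℝ (Fin n), r < ‖x‖ →
        ∀ v w : EuclideanSpace ℝ (Fin n),
          fderiv ℝ (fderiv ℝ u) x v w =
            (∑ i : Fin n, fderiv ℝ (fderiv ℝ u) x (EuclideanSpace.single i 1)
              (EuclideanSpace.single i 1)) * ⟪v, w⟫) ∧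
      (∀ x : EuclideanSpace ℝ (Fin n), ‖x‖ = r → fderiv ℝ u x x = u x)) ↔
      ∃ b : EuclideanSpace ℝ (Fin n),
        ∀ x : EuclideanSpace ℝ (Fin n), r ≤ ‖x‖ → u x = ⟪b, x⟫ := by
  have hsopen : IsOpen {x : EuclideanSpace ℝ (Fin n) | r < ‖x‖} :=
    isOpen_lt continuous_const continuous_norm
  have hsU : {x : EuclideanSpace ℝ (Fin n) | r < ‖x‖} ⊆ U := fun x hx => hU (show r ≤ ‖x‖ from le_of_lt hx)
  have hfderiv_cont : ContinuousOn (fderiv ℝ u) U :=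
    hu.continuousOn_fderiv_of_isOpen hUopen (by norm_num)
  have hpc := isPreconnected_exterior n hn r hr
  constructor
  · rintro ⟨h1, h2⟩
    -- differentiability facts
    have hdiffF : ∀ x ∈ {x : EuclideanSpace ℝ (Fin n) | r < ‖x‖},
        DifferentiableAt ℝ (fderiv ℝ u) x := by
      intro x hx
      have hca : ContDiffAt ℝ 2 u x := hu.contDiffAt (hUopen.mem_nhds (hsU hx))
      exact (hca.fderiv_right (m := 1) (by norm_num)).differentiableAt (by norm_num)
    have hdiffu : ∀ x ∈ U, DifferentiableAt ℝ u x := fun x hx =>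
      (hu.contDiffAt (hUopen.mem_nhds hx)).differentiableAt two_ne_zero
    -- the Laplacian vanishes
    have hlap : ∀ x : EuclideanSpace ℝ (Fin n), r < ‖x‖ →
        (∑ i : Fin n, fderiv ℝ (fderiv ℝ u) x (EuclideanSpace.single i 1)
          (EuclideanSpace.single i 1)) = 0 := by
      intro x hx
      set Δ : ℝ := ∑ i : Fin n, fderiv ℝ (fderiv ℝ u) x (EuclideanSpace.single i 1)
          (EuclideanSpace.single i 1) with hΔ
      have hself : ∀ i : Fin n,
          ⟪(EuclideanSpace.single i 1 : EuclideanSpace ℝ (Fin n)),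
            EuclideanSpace.single i 1⟫ = (1 : ℝ) := by
        intro i
        simp [EuclideanSpace.inner_single_left, EuclideanSpace.single_apply]
      have hΔn : Δ = (n : ℝ) * Δ := by
        conv_lhs => rw [hΔ]
        rw [Finset.sum_congr rfl fun i _ => by
          rw [h1 x hx (EuclideanSpace.single i 1) (EuclideanSpace.single i 1), hself i, mul_one]]
        simp [mul_comm, hΔ]
      have hn' : (2 : ℝ) ≤ (n : ℝ) := by exact_mod_cast hn
      have h0 : ((n : ℝ) - 1) * Δ = 0 := by linarith [hΔn]
      rcases mul_eq_zero.1 h0 with h | h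
      · linarith
      · exact h
    -- Hessian vanishes
    have hD2 : ∀ x ∈ {x : EuclideanSpace ℝ (Fin n) | r < ‖x‖},
        fderiv ℝ (fderiv ℝ u) x = 0 := by
      intro x hx
      refine ContinuousLinearMap.ext fun v => ContinuousLinearMap.ext fun w => ?_
      rw [h1 x hx v w, hlap x hx]
      simp
    -- base point
    set e : EuclideanSpace ℝ (Fin n) :=
      EuclideanSpace.single (⟨0, by omega⟩ : Fin n) 1 with he
    have hne : ‖e‖ = 1 := by simp [he]
    set x₀ : EuclideanSpace ℝ (Fin n) := (r + 1) • e with hx₀def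
    have hx₀ : x₀ ∈ {x : EuclideanSpace ℝ (Fin n) | r < ‖x‖} := by
      simp only [Set.mem_setOf_eq, hx₀def, norm_smul, hne, mul_one, Real.norm_eq_abs,
        abs_of_pos (by linarith : (0:ℝ) < r + 1)]
      linarith
    set L := fderiv ℝ u x₀ with hL
    -- fderiv u is constantly L on the exterior
    have hLconst : ∀ x : EuclideanSpace ℝ (Fin n), r < ‖x‖ → fderiv ℝ u x = L :=
      fun x hx => const_of_fderiv_zero_on hsopen hpc hdiffF hD2 hx hx₀
    -- u - L is constant on the exterior
    set c : ℝ := u x₀ - L x₀ with hc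
    have hcconst : ∀ x : EuclideanSpace ℝ (Fin n), r < ‖x‖ → u x - L x = c := by
      intro x hx
      refine const_of_fderiv_zero_on (f := fun y => u y - L y) hsopen hpc ?_ ?_ hx hx₀
      · intro y hy
        exact (hdiffu y (hsU hy)).sub L.differentiableAt
      · intro y hy
        have : HasFDerivAt (fun z => u z - L z) (fderiv ℝ u y - L) y :=
          (hdiffu y (hsU hy)).hasFDerivAt.sub L.hasFDerivAt
        rw [this.fderiv, hLconst y hy, sub_self]
    -- extension to the boundary
    have hbd_u : ∀ x : EuclideanSpace ℝ (Fin n), ‖x‖ = r → u x - L x = c := by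
      intro x hx
      refine boundary_limit hr hx ?_ hcconst
      exact ((hu.contDiffAt (hUopen.mem_nhds (hU hx.ge))).continuousAt).sub
        L.continuous.continuousAt
    have hbd_f : ∀ x : EuclideanSpace ℝ (Fin n), ‖x‖ = r → fderiv ℝ u x = L := by
      intro x hx
      exact boundary_limit hr hx
        (hfderiv_cont.continuousAt (hUopen.mem_nhds (hU hx.ge))) hLconst
    -- boundary condition kills the constant
    have hc0 : c = 0 := by
      set xb : EuclideanSpace ℝ (Fin n) := r • e with hxb
      have hxbn : ‖xb‖ = r := by
        simp [hxb, norm_smul, hne, abs_of_pos hr]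
      have hb2 := h2 xb hxbn
      rw [hbd_f xb hxbn] at hb2
      have := hbd_u xb hxbn
      linarith
    refine ⟨(InnerProductSpace.toDual ℝ (EuclideanSpace ℝ (Fin n))).symm L, ?_⟩
    intro x hx
    have hux : u x - L x = c := by
      rcases lt_or_eq_of_le hx with h | h
      · exact hcconst x h
      · exact hbd_u x h.symm
    rw [InnerProductSpace.toDual_symm_apply]
    rw [hc0] at hux
    linarith
  · rintro ⟨b, hb⟩
    set ℓ : EuclideanSpace ℝ (Fin n) →L[ℝ] ℝ := innerSL ℝ b with hℓ
    have hℓfun : (fun y : EuclideanSpace ℝ (Fin n) => ⟪b, y⟫) = ⇑ℓ := by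
      ext y; simp [hℓ]
    have hfd : ∀ x : EuclideanSpace ℝ (Fin n), r < ‖x‖ → fderiv ℝ u x = ℓ := by
      intro x hx
      have hev : u =ᶠ[nhds x] fun y => ⟪b, y⟫ :=
        Filter.eventuallyEq_of_mem (hsopen.mem_nhds hx) fun y hy => hb y (le_of_lt hy)
      rw [hev.fderiv_eq, hℓfun, ℓ.fderiv]
    constructor
    · intro x hx v w
      have hz : fderiv ℝ (fderiv ℝ u) x = 0 := by
        have hev : fderiv ℝ u =ᶠ[nhds x] fun _ => ℓ :=
          Filter.eventuallyEq_of_mem (hsopen.mem_nhds hx) fun y hy => hfd y hy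
        rw [hev.fderiv_eq, fderiv_fun_const]
        rfl
      rw [hz]
      simp
    · intro x hx
      have hfx : fderiv ℝ u x = ℓ := boundary_limit hr hx
        (hfderiv_cont.continuousAt (hUopen.mem_nhds (hU hx.ge))) hfd
      rw [hfx, hb x hx.ge, hℓ]
      simp
end

section
/- Let n ≥ 2, let η > −1, and let a = (a₁, …, aₙ) ∈ ℝⁿ with Σ_{i=1}^n a_i² = 1. Set y = (a₁, …, a_{n−1}, η + aₙ) and assume yₙ = η + aₙ > 0 (so y lies on the Euclidean unit sphere centered at O = (0, …, 0, η) inside the upper half-space). Let D_ν f(y) := yₙ·Σ_{i=1}^n a_i·∂f/∂y_i(y) denote the derivative along the hyperbolic outward unit normal ν = yₙ·a. Then: (i) D_ν x₀(y) − η·x₀(y) = −η²/2; (ii) D_ν x_m(y) − η·x_m(y) = 0 for each 1 ≤ m ≤ n−1; (iii) D_ν xₙ(y) − η·xₙ(y) = 1 − η²/2. Consequently, the function v := (2−η²)·x₀ + η²·xₙ satisfies the non-generic boundary equation D_ν v(y) − η·v(y) = 0 at every such point y. -/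
/-- The hyperboloid coordinate `x₀` expressed in the upper half-space model, with a point of
the half-space written as `p = (y, t)`, `y ∈ ℝᵏ` the first `k = n−1` coordinates, `t = yₙ`. -/
noncomputable def X0 (k : ℕ) (p : EuclideanSpace ℝ (Fin k) × ℝ) : ℝ :=
  ((∑ m : Fin k, p.1 m ^ 2) + p.2 ^ 2 + 1) / (2 * p.2)

/-- The hyperboloid coordinate `x_m`, `1 ≤ m ≤ n−1`, in the upper half-space model. -/
noncomputable def Xc (k : ℕ) (m : Fin k) (p : EuclideanSpace ℝ (Fin k) × ℝ) : ℝ :=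
  p.1 m / p.2

/-- The hyperboloid coordinate `xₙ` in the upper half-space model. -/
noncomputable def Xlast (k : ℕ) (p : EuclideanSpace ℝ (Fin k) × ℝ) : ℝ :=
  ((∑ m : Fin k, p.1 m ^ 2) + p.2 ^ 2 - 1) / (2 * p.2)

/-- The derivative `D_ν f(y) = yₙ·Σᵢ aᵢ·∂f/∂yᵢ` along the hyperbolic outward unit normal
`ν = yₙ·a` of the Euclidean unit sphere, where `a = (a', aₙ)`. -/
noncomputable def Dnu (k : ℕ) (a : EuclideanSpace ℝ (Fin k)) (an : ℝ)
    (f : EuclideanSpace ℝ (Fin k) × ℝ → ℝ) (p : EuclideanSpace ℝ (Fin k) × ℝ) : ℝ :=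
  p.2 * ((∑ i : Fin k, a i * fderiv ℝ f p (EuclideanSpace.single i 1, 0)) +
    an * fderiv ℝ f p (0, 1))

/- Auxiliary continuous linear maps and derivative computations. -/

noncomputable def coordL (k : ℕ) (m : Fin k) : (EuclideanSpace ℝ (Fin k) × ℝ) →L[ℝ] ℝ :=
  (EuclideanSpace.proj m).comp (ContinuousLinearMap.fst ℝ (EuclideanSpace ℝ (Fin k)) ℝ)

noncomputable def sndL (k : ℕ) : (EuclideanSpace ℝ (Fin k) × ℝ) →L[ℝ] ℝ :=
  ContinuousLinearMap.snd ℝ (EuclideanSpace ℝ (Fin k)) ℝ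

lemma hasFDerivAt_coord {k : ℕ} (m : Fin k) (p : EuclideanSpace ℝ (Fin k) × ℝ) :
    HasFDerivAt (fun q : EuclideanSpace ℝ (Fin k) × ℝ => q.1 m) (coordL k m) p :=
  (coordL k m).hasFDerivAt

lemma hasFDerivAt_snd' {k : ℕ} (p : EuclideanSpace ℝ (Fin k) × ℝ) :
    HasFDerivAt (fun q : EuclideanSpace ℝ (Fin k) × ℝ => q.2) (sndL k) p :=
  (sndL k).hasFDerivAt

lemma hasFDerivAt_num {k : ℕ} (c : ℝ) (p : EuclideanSpace ℝ (Fin k) × ℝ) :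
    HasFDerivAt (fun q : EuclideanSpace ℝ (Fin k) × ℝ => (∑ m : Fin k, q.1 m ^ 2) + q.2 ^ 2 + c)
      ((∑ m : Fin k, (2 * p.1 m) • coordL k m) + (2 * p.2) • sndL k) p := by
  have hS : HasFDerivAt (fun q : EuclideanSpace ℝ (Fin k) × ℝ => ∑ m : Fin k, q.1 m ^ 2)
      (∑ m : Fin k, (2 * p.1 m) • coordL k m) p := by
    refine HasFDerivAt.fun_sum fun m _ => ?_
    have e : (2 * p.1 m) • coordL k m = p.1 m • coordL k m + p.1 m • coordL k m := by
      rw [← add_smul]; ring_nf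
    rw [e]
    simpa [pow_two] using (hasFDerivAt_coord m p).fun_mul (hasFDerivAt_coord m p)
  have hsq : HasFDerivAt (fun q : EuclideanSpace ℝ (Fin k) × ℝ => q.2 ^ 2)
      ((2 * p.2) • sndL k) p := by
    have e : (2 * p.2) • sndL k = p.2 • sndL k + p.2 • sndL k := by
      rw [← add_smul]; ring_nf
    rw [e]
    simpa [pow_two] using (hasFDerivAt_snd' p).fun_mul (hasFDerivAt_snd' p)
  exact (hS.add hsq).add_const c

lemma hasFDerivAt_X {k : ℕ} (c : ℝ) (p : EuclideanSpace ℝ (Fin k) × ℝ) (hp : p.2 ≠ 0) :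
    HasFDerivAt (fun q : EuclideanSpace ℝ (Fin k) × ℝ =>
        ((∑ m : Fin k, q.1 m ^ 2) + q.2 ^ 2 + c) / (2 * q.2))
      ((((∑ m : Fin k, p.1 m ^ 2) + p.2 ^ 2 + c) • ((-((2 * p.2) ^ 2)⁻¹) • ((2 : ℝ) • sndL k))) +
        (2 * p.2)⁻¹ • ((∑ m : Fin k, (2 * p.1 m) • coordL k m) + (2 * p.2) • sndL k)) p := by
  have hden : HasFDerivAt (fun q : EuclideanSpace ℝ (Fin k) × ℝ => 2 * q.2)
      ((2 : ℝ) • sndL k) p := (hasFDerivAt_snd' p).const_mul 2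
  have hinv : HasFDerivAt (fun q : EuclideanSpace ℝ (Fin k) × ℝ => (2 * q.2)⁻¹)
      ((-((2 * p.2) ^ 2)⁻¹) • ((2 : ℝ) • sndL k)) p := by
    exact (hasDerivAt_inv (mul_ne_zero two_ne_zero hp)).comp_hasFDerivAt p hden
  have h := (hasFDerivAt_num c p).mul hinv
  have hfun : (fun q : EuclideanSpace ℝ (Fin k) × ℝ =>
      ((∑ m : Fin k, q.1 m ^ 2) + q.2 ^ 2 + c) / (2 * q.2)) =
      fun q : EuclideanSpace ℝ (Fin k) × ℝ =>
        ((∑ m : Fin k, q.1 m ^ 2) + q.2 ^ 2 + c) * (2 * q.2)⁻¹ := by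
    funext q; rw [div_eq_mul_inv]
  rw [hfun]
  exact h

lemma hasFDerivAt_Xc' {k : ℕ} (m : Fin k) (p : EuclideanSpace ℝ (Fin k) × ℝ) (hp : p.2 ≠ 0) :
    HasFDerivAt (fun q : EuclideanSpace ℝ (Fin k) × ℝ => q.1 m / q.2)
      (p.1 m • ((-(p.2 ^ 2)⁻¹) • sndL k) + (p.2)⁻¹ • coordL k m) p := by
  have hinv : HasFDerivAt (fun q : EuclideanSpace ℝ (Fin k) × ℝ => (q.2)⁻¹)
      ((-(p.2 ^ 2)⁻¹) • sndL k) p := by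
    exact (hasDerivAt_inv hp).comp_hasFDerivAt p (hasFDerivAt_snd' p)
  have h := (hasFDerivAt_coord m p).mul hinv
  have hfun : (fun q : EuclideanSpace ℝ (Fin k) × ℝ => q.1 m / q.2) =
      fun q : EuclideanSpace ℝ (Fin k) × ℝ => q.1 m * (q.2)⁻¹ := by
    funext q; rw [div_eq_mul_inv]
  rw [hfun]
  exact h

set_option maxHeartbeats 2000000 in
/-- For the Euclidean unit sphere centered at `O = (0,…,0,η)`, `η > −1`, at the point
`y = O + a` (with `|a| = 1`, `yₙ = η + aₙ > 0`): `D_ν x₀ − η x₀ = −η²/2`,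
`D_ν x_m − η x_m = 0` for `1 ≤ m ≤ n−1`, `D_ν xₙ − η xₙ = 1 − η²/2`; consequently
`v = (2−η²)x₀ + η²xₙ` satisfies the non-generic boundary equation `D_ν v − η v = 0`. -/
theorem sphere_boundary_hyperbolic (n : ℕ) (hn : 2 ≤ n) (η : ℝ) (hη : -1 < η)
    (a : EuclideanSpace ℝ (Fin (n - 1))) (an : ℝ)
    (ha : (∑ i : Fin (n - 1), a i ^ 2) + an ^ 2 = 1) (ht : 0 < η + an) :
    (Dnu (n - 1) a an (X0 (n - 1)) (a, η + an) - η * X0 (n - 1) (a, η + an) = -η ^ 2 / 2) ∧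
      (∀ m : Fin (n - 1),
        Dnu (n - 1) a an (Xc (n - 1) m) (a, η + an) - η * Xc (n - 1) m (a, η + an) = 0) ∧
      (Dnu (n - 1) a an (Xlast (n - 1)) (a, η + an) - η * Xlast (n - 1) (a, η + an) =
        1 - η ^ 2 / 2) ∧
      (Dnu (n - 1) a an (fun p => (2 - η ^ 2) * X0 (n - 1) p + η ^ 2 * Xlast (n - 1) p)
          (a, η + an) -
        η * ((2 - η ^ 2) * X0 (n - 1) (a, η + an) + η ^ 2 * Xlast (n - 1) (a, η + an)) = 0) := by
  have ht0 : η + an ≠ 0 := ne_of_gt ht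
  have hsq : (∑ i : Fin (n - 1), a i ^ 2) = 1 - an ^ 2 := by linarith
  have hX0fun : X0 (n - 1) = fun q : EuclideanSpace ℝ (Fin (n - 1)) × ℝ =>
      ((∑ m : Fin (n - 1), q.1 m ^ 2) + q.2 ^ 2 + 1) / (2 * q.2) := by
    funext q; simp [X0]
  have hXlfun : Xlast (n - 1) = fun q : EuclideanSpace ℝ (Fin (n - 1)) × ℝ =>
      ((∑ m : Fin (n - 1), q.1 m ^ 2) + q.2 ^ 2 + (-1)) / (2 * q.2) := by
    funext q; simp [Xlast, sub_eq_add_neg]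
  have hXcfun : ∀ m : Fin (n - 1), Xc (n - 1) m = fun q : EuclideanSpace ℝ (Fin (n - 1)) × ℝ =>
      q.1 m / q.2 := fun m => rfl
  -- fderiv values of X0
  have hA0 : ∀ i : Fin (n - 1), fderiv ℝ (X0 (n - 1)) (a, η + an)
      (EuclideanSpace.single i 1, 0) = a i / (η + an) := by
    intro i
    rw [hX0fun, (hasFDerivAt_X 1 ((a, η + an) : EuclideanSpace ℝ (Fin (n - 1)) × ℝ) ht0).fderiv]
    simp [coordL, sndL, EuclideanSpace.single_apply, mul_ite, Finset.sum_ite_eq']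
    field_simp
  have hB0 : fderiv ℝ (X0 (n - 1)) (a, η + an) (0, 1) =
      ((η + an) ^ 2 - 2 + an ^ 2) / (2 * (η + an) ^ 2) := by
    rw [hX0fun, (hasFDerivAt_X 1 ((a, η + an) : EuclideanSpace ℝ (Fin (n - 1)) × ℝ) ht0).fderiv]
    simp [coordL, sndL]
    rw [hsq]
    field_simp
    ring
  -- fderiv values of Xlast
  have hAl : ∀ i : Fin (n - 1), fderiv ℝ (Xlast (n - 1)) (a, η + an)
      (EuclideanSpace.single i 1, 0) = a i / (η + an) := by
    intro i
    rw [hXlfun,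
      (hasFDerivAt_X (-1) ((a, η + an) : EuclideanSpace ℝ (Fin (n - 1)) × ℝ) ht0).fderiv]
    simp [coordL, sndL, EuclideanSpace.single_apply, mul_ite, Finset.sum_ite_eq']
    field_simp
  have hBl : fderiv ℝ (Xlast (n - 1)) (a, η + an) (0, 1) =
      ((η + an) ^ 2 + an ^ 2) / (2 * (η + an) ^ 2) := by
    rw [hXlfun,
      (hasFDerivAt_X (-1) ((a, η + an) : EuclideanSpace ℝ (Fin (n - 1)) × ℝ) ht0).fderiv]
    simp [coordL, sndL]
    rw [hsq]
    field_simp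
    ring
  -- fderiv values of Xc
  have hAc : ∀ m i : Fin (n - 1), fderiv ℝ (Xc (n - 1) m) (a, η + an)
      (EuclideanSpace.single i 1, 0) = if m = i then (η + an)⁻¹ else 0 := by
    intro m i
    rw [hXcfun m,
      (hasFDerivAt_Xc' m ((a, η + an) : EuclideanSpace ℝ (Fin (n - 1)) × ℝ) ht0).fderiv]
    simp [coordL, sndL, EuclideanSpace.single_apply]
  have hBc : ∀ m : Fin (n - 1), fderiv ℝ (Xc (n - 1) m) (a, η + an) (0, 1) =
      -(a m / (η + an) ^ 2) := by
    intro m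
    rw [hXcfun m,
      (hasFDerivAt_Xc' m ((a, η + an) : EuclideanSpace ℝ (Fin (n - 1)) × ℝ) ht0).fderiv]
    simp [coordL, sndL]
    field_simp
  -- sums
  have hs1 : ∑ i : Fin (n - 1), a i * (a i / (η + an)) = (1 - an ^ 2) / (η + an) := by
    rw [Finset.sum_congr rfl fun i _ =>
      (by ring : a i * (a i / (η + an)) = a i ^ 2 * (1 / (η + an)))]
    rw [← Finset.sum_mul, hsq]
    ring
  -- part (i)
  have part1 : Dnu (n - 1) a an (X0 (n - 1)) (a, η + an) - η * X0 (n - 1) (a, η + an) =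
      -η ^ 2 / 2 := by
    simp only [Dnu, X0, hA0, hB0]
    rw [hs1, hsq]
    field_simp
    ring
  -- part (iii)
  have part3 : Dnu (n - 1) a an (Xlast (n - 1)) (a, η + an) -
      η * Xlast (n - 1) (a, η + an) = 1 - η ^ 2 / 2 := by
    simp only [Dnu, Xlast, hAl, hBl]
    rw [hs1, hsq]
    field_simp
    ring
  -- part (ii)
  have part2 : ∀ m : Fin (n - 1),
      Dnu (n - 1) a an (Xc (n - 1) m) (a, η + an) - η * Xc (n - 1) m (a, η + an) = 0 := by
    intro m
    have hsum : ∑ i : Fin (n - 1), a i * fderiv ℝ (Xc (n - 1) m) (a, η + an)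
        (EuclideanSpace.single i 1, 0) = a m * (η + an)⁻¹ := by
      simp only [hAc, mul_ite, mul_zero]
      simp [Finset.sum_ite_eq]
    simp only [Dnu, Xc, hBc]
    rw [hsum]
    field_simp
    ring
  -- part (iv)
  refine ⟨part1, part2, part3, ?_⟩
  have h0' : HasFDerivAt (X0 (n - 1))
      ((((∑ m : Fin (n - 1), a m ^ 2) + (η + an) ^ 2 + 1) •
          ((-((2 * (η + an)) ^ 2)⁻¹) • ((2 : ℝ) • sndL (n - 1)))) +
        (2 * (η + an))⁻¹ • ((∑ m : Fin (n - 1), (2 * a m) • coordL (n - 1) m) +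
          (2 * (η + an)) • sndL (n - 1))) (a, η + an) :=
    hasFDerivAt_X 1 ((a, η + an) : EuclideanSpace ℝ (Fin (n - 1)) × ℝ) ht0
  have hl' : HasFDerivAt (Xlast (n - 1))
      ((((∑ m : Fin (n - 1), a m ^ 2) + (η + an) ^ 2 + (-1)) •
          ((-((2 * (η + an)) ^ 2)⁻¹) • ((2 : ℝ) • sndL (n - 1)))) +
        (2 * (η + an))⁻¹ • ((∑ m : Fin (n - 1), (2 * a m) • coordL (n - 1) m) +
          (2 * (η + an)) • sndL (n - 1))) (a, η + an) := by
    rw [hXlfun]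
    exact hasFDerivAt_X (-1) ((a, η + an) : EuclideanSpace ℝ (Fin (n - 1)) × ℝ) ht0
  have hgv : ∀ v : EuclideanSpace ℝ (Fin (n - 1)) × ℝ,
      fderiv ℝ (fun p => (2 - η ^ 2) * X0 (n - 1) p + η ^ 2 * Xlast (n - 1) p) (a, η + an) v =
        (2 - η ^ 2) * fderiv ℝ (X0 (n - 1)) (a, η + an) v +
          η ^ 2 * fderiv ℝ (Xlast (n - 1)) (a, η + an) v := by
    intro v
    rw [((h0'.const_mul (2 - η ^ 2)).fun_add (hl'.const_mul (η ^ 2))).fderiv]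
    rw [h0'.fderiv, hl'.fderiv]
    simp only [ContinuousLinearMap.add_apply, ContinuousLinearMap.smul_apply,
      ContinuousLinearMap.sum_apply, ContinuousLinearMap.neg_apply, smul_eq_mul]
  have hsum2 : ∑ i : Fin (n - 1),
      a i * ((2 - η ^ 2) * (a i / (η + an)) + η ^ 2 * (a i / (η + an))) =
      2 * ((1 - an ^ 2) / (η + an)) := by
    rw [Finset.sum_congr rfl fun i _ =>
      (by ring : a i * ((2 - η ^ 2) * (a i / (η + an)) + η ^ 2 * (a i / (η + an))) =
        a i ^ 2 * (2 / (η + an)))]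
    rw [← Finset.sum_mul, hsq]
    ring
  simp only [Dnu]
  simp only [hgv]
  simp only [hA0, hAl, hB0, hBl]
  rw [hsum2]
  simp only [X0, Xlast]
  rw [hsq]
  field_simp
  ring
end
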